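/- Let D be the open unit ball of a JB*-triple V. If (y_k) is a sequence in D converging in norm to a point ξ ∈ ∂D (i.e. ‖ξ‖ = 1), then for every z ∈ D one has lim_k ‖g_{−y_k}(z)‖ = 1, where g_{−y} is the Möbius transformation of D mapping y to 0. -/

import Mathlib

open scoped ComplexConjugate

class JBStarTriple (V : Type*) [NormedAddCommGroup V] [NormedSpace ℂ V] where
  tp : V → V → V → V
  box : V → V → V →L[ℂ] V
  box_apply : ∀ a b x : V, box a b x = tp a b x
  add_fst : ∀ a a' b c : V, tp (a + a') b c = tp a b c + tp a' b c
  smul_fst : ∀ (α : ℂ) (a b c : V), tp (α • a) b c = α • tp a b c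
  symm_outer : ∀ a b c : V, tp a b c = tp c b a
  add_snd : ∀ a b b' c : V, tp a (b + b') c = tp a b c + tp a b' c
  conj_snd : ∀ (α : ℂ) (a b c : V), tp a (α • b) c = conj α • tp a b c
  jordan_identity : ∀ a b x y z : V,
    tp a b (tp x y z) = tp (tp a b x) y z - tp x (tp b a y) z + tp x y (tp a b z)
  hermitian : ∀ (a : V) (t : ℝ), ‖NormedSpace.exp ((Complex.I * (t : ℂ)) • box a a)‖ = 1
  nonneg_spectrum : ∀ a : V, spectrum ℂ (box a a) ⊆ {z : ℂ | 0 ≤ z.re ∧ z.im = 0}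
  norm_tp_le : ∀ a b c : V, ‖tp a b c‖ ≤ ‖a‖ * ‖b‖ * ‖c‖
  norm_tp_self : ∀ a : V, ‖tp a a a‖ = ‖a‖ ^ 3

namespace JBStarTriple

variable {V : Type*} [NormedAddCommGroup V] [NormedSpace ℂ V] [JBStarTriple V]

def IsTripotent (e : V) : Prop := tp e e e = e

def Orthogonal (a b : V) : Prop := ∀ x : V, tp a b x = 0

def IsMinimalTripotent (e : V) : Prop :=
  IsTripotent e ∧ e ≠ 0 ∧ ∀ v : V, ∃ α : ℂ, tp e v e = α • e

def Peirce2 (e : V) : Set V := {x : V | tp e e x = x}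

/-- `c ≤ e` for tripotents: `e - c` is a tripotent orthogonal to `c`. -/
def TripLE (c e : V) : Prop := IsTripotent (e - c) ∧ Orthogonal (e - c) c

/-- The box operator as a `ℂ`-linear map. -/
def boxL (x y : V) : V →ₗ[ℂ] V where
  toFun v := tp x y v
  map_add' u v := by
    show tp x y (u + v) = tp x y u + tp x y v
    rw [symm_outer x y (u + v), add_fst, ← symm_outer x y u, ← symm_outer x y v]
  map_smul' α v := by
    show tp x y (α • v) = α • tp x y v
    rw [symm_outer x y (α • v), smul_fst, ← symm_outer x y v]

/-- The trace inner product `⟨x, y⟩ = Tr (x □ y)`. -/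
noncomputable def trform (x y : V) : ℂ := LinearMap.trace ℂ V (boxL x y)

end JBStarTriple

open JBStarTriple

/-!
Write `B(x,y) = 1 - 2L + P` with `L = x □ y` and `P = Q_x Q_y`; these commute. The coefficients
`Hₙ` of `(1 - 2Lt + Pt²)⁻¹` satisfy a Chebyshev recurrence, and the Jordan identity turns them
into the closed form `Hₙ₊₂ = 2 (Lⁿ⁺¹x) □ y + ∑_{i+j=n} Q(Lⁱx, Lʲx) Q_y`, whence
`‖Hₙ‖ ≤ (n+1) (‖x‖‖y‖)ⁿ`. As `V` need not be complete, the partial sums of `∑ Hₙ` are used as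
approximate left inverses of `B(x,y)`, which gives `‖v‖ ≤ (1 - ‖x‖‖y‖)⁻² ‖B(x,y) v‖`.

For `x = z` and `y = y_k` this bound is uniform in `k`, so the operator
`B(z,z)^{-1/2} B(z,y_k) B(y_k,y_k)^{-1/2}` has norm at least a constant times
`‖B(y_k,y_k)^{-1/2}‖ = (1 - ‖y_k‖²)⁻¹ → ∞`, i.e. `1 - ‖g_{-y_k}(z)‖² → 0`.
-/

open Filter Topology Finset

section Chebyshev

variable {R : Type*} [Ring R]

/-- The coefficients of `(1 - 2 l t + p t²)⁻¹`; for `p = 1` these are the Chebyshev polynomials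
`Uₙ(l)` of the second kind. -/
def chebyshevSeq (l p : R) : ℕ → R
  | 0 => 1
  | 1 => 2 * l
  | n + 2 => 2 * l * chebyshevSeq l p (n + 1) - p * chebyshevSeq l p n

theorem Commute.chebyshevSeq_right {q l p : R} (hl : Commute q l) (hp : Commute q p) :
    ∀ n, Commute q (chebyshevSeq l p n)
  | 0 => Commute.one_right q
  | 1 => (Commute.ofNat_right q 2).mul_right hl
  | n + 2 => (((Commute.ofNat_right q 2).mul_right hl).mul_right
      (hl.chebyshevSeq_right hp (n + 1))).sub_right (hp.mul_right (hl.chebyshevSeq_right hp n))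

theorem mul_sum_range_chebyshevSeq (l p : R) (N : ℕ) :
    (1 - 2 * l + p) * ∑ n ∈ range (N + 1), chebyshevSeq l p n
      = 1 - chebyshevSeq l p (N + 1) + p * chebyshevSeq l p N := by
  induction N with
  | zero => simp [chebyshevSeq]
  | succ N ih =>
    rw [sum_range_succ, mul_add, ih, chebyshevSeq]
    noncomm_ring

theorem Commute.anticomm_left_comm {l p : R} (h : Commute l p) (a : R) :
    p * (l * a + a * l) + (l * a + a * l) * p = l * (p * a + a * p) + (p * a + a * p) * l := by
  simp only [mul_add, add_mul, ← mul_assoc, h.eq]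
  rw [mul_assoc a l p, h.eq, ← mul_assoc]
  abel

end Chebyshev

section BoundedBelow

variable {𝕜 E : Type*} [NontriviallyNormedField 𝕜] [NormedAddCommGroup E] [NormedSpace 𝕜 E]

theorem norm_le_of_tendsto_norm_one_sub_mul {A : E →L[𝕜] E} {W : ℕ → E →L[𝕜] E} {C : ℝ}
    (hW : ∀ N, ‖W N‖ ≤ C) (hWA : Tendsto (fun N ↦ ‖1 - W N * A‖) atTop (𝓝 0)) (v : E) :
    ‖v‖ ≤ C * ‖A v‖ := by
  have hN : ∀ N, ‖v‖ ≤ C * ‖A v‖ + ‖1 - W N * A‖ * ‖v‖ := fun N ↦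
    calc ‖v‖ = ‖W N (A v) + (1 - W N * A) v‖ := by simp
      _ ≤ ‖W N‖ * ‖A v‖ + ‖1 - W N * A‖ * ‖v‖ :=
        (norm_add_le _ _).trans (add_le_add ((W N).le_opNorm _) (ContinuousLinearMap.le_opNorm _ _))
      _ ≤ C * ‖A v‖ + ‖1 - W N * A‖ * ‖v‖ := by gcongr; exact hW N
  simpa using ge_of_tendsto' (tendsto_const_nhds.add (hWA.mul_const ‖v‖)) hN

theorem norm_le_of_norm_chebyshevSeq_le {l p : E →L[𝕜] E} (hlp : Commute l p) {r : ℝ}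
    (hr₀ : 0 ≤ r) (hr : r < 1) (hp : ‖p‖ ≤ 1)
    (hh : ∀ n, ‖chebyshevSeq l p n‖ ≤ (n + 1) * r ^ n) (v : E) :
    ‖v‖ ≤ ((1 - r) ^ 2)⁻¹ * ‖(1 - 2 * l + p) v‖ := by
  have hsum : HasSum (fun n : ℕ ↦ (n + 1) * r ^ n) ((1 - r) ^ 2)⁻¹ := by
    simpa using hasSum_choose_mul_geometric_of_norm_lt_one 1
      (by rwa [Real.norm_of_nonneg hr₀] : ‖r‖ < 1)
  have hcomm : Commute (1 - 2 * l + p) l :=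
    ((Commute.one_left l).sub_left ((Commute.ofNat_left 2 l).mul_left (.refl l))).add_left hlp.symm
  have hcomm' : Commute (1 - 2 * l + p) p :=
    ((Commute.one_left p).sub_left ((Commute.ofNat_left 2 p).mul_left hlp)).add_left (.refl p)
  refine norm_le_of_tendsto_norm_one_sub_mul
    (W := fun N ↦ ∑ n ∈ range (N + 1), chebyshevSeq l p n) (fun N ↦ ?_) ?_ v
  · refine (norm_sum_le _ _).trans ((sum_le_sum fun n _ ↦ hh n).trans ?_)
    exact sum_le_hasSum _ (fun n _ ↦ by positivity) hsum
  · have herr : ∀ N, ‖1 - (∑ n ∈ range (N + 1), chebyshevSeq l p n) * (1 - 2 * l + p)‖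
        ≤ (N + 1 + 1) * r ^ (N + 1) + (N + 1) * r ^ N := by
      intro N
      rw [(Commute.sum_left _ _ _ fun n _ ↦ (hcomm.chebyshevSeq_right hcomm' n).symm).eq,
        mul_sum_range_chebyshevSeq, sub_add_eq_sub_sub, sub_sub_cancel]
      refine (norm_sub_le _ _).trans (add_le_add (by exact_mod_cast hh (N + 1)) ?_)
      calc ‖p * chebyshevSeq l p N‖ ≤ 1 * ((N + 1) * r ^ N) :=
            (norm_mul_le _ _).trans (mul_le_mul hp (hh N) (norm_nonneg _) zero_le_one)
        _ = (N + 1) * r ^ N := one_mul _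
    have hlim := hsum.summable.tendsto_atTop_zero
    refine squeeze_zero (fun _ ↦ norm_nonneg _) herr ?_
    simpa using ((tendsto_add_atTop_iff_nat 1).2 hlim).add hlim

theorem opNorm_le_mul_opNorm_comp {F G : Type*} [NormedAddCommGroup F] [NormedSpace 𝕜 F]
    [NormedAddCommGroup G] [NormedSpace 𝕜 G] {A : E →L[𝕜] G} {C : ℝ} (hC : 0 ≤ C)
    (hA : ∀ v, ‖v‖ ≤ C * ‖A v‖) (S : F →L[𝕜] E) : ‖S‖ ≤ C * ‖A.comp S‖ :=
  S.opNorm_le_bound (by positivity) fun v ↦ (hA (S v)).trans <| by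
    rw [mul_assoc]; exact mul_le_mul_of_nonneg_left ((A.comp S).le_opNorm v) hC

end BoundedBelow

namespace JBStarTriple

variable {V : Type*} [NormedAddCommGroup V] [NormedSpace ℂ V] [JBStarTriple V]

theorem tp_tp_eq_tp_quad (x y w : V) : tp x (tp y x w) x = tp (tp x y x) w x := by
  have E1 := jordan_identity x w x y x
  have E2 := jordan_identity x y x w x
  have s1 : tp x w (tp x y x) = tp (tp x y x) w x := symm_outer _ _ _
  have s2 : tp x y (tp x w x) = tp (tp x w x) y x := symm_outer _ _ _
  have s3 : tp x (tp w x y) x = tp x (tp y x w) x := by rw [symm_outer w x y]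
  linear_combination (norm := module) (1/3 : ℂ) • E1 + (2/3 : ℂ) • E2 + (1/3 : ℂ) • s1
    - (1/3 : ℂ) • s2 - (1/3 : ℂ) • s3

theorem tp_quad_eq_quad_tp (x y v : V) : tp y x (tp y v y) = tp y (tp x y v) y := by
  have J := jordan_identity y x y v y
  have s1 : tp y v (tp y x y) = tp (tp y x y) v y := symm_outer _ _ _
  have i2 := tp_tp_eq_tp_quad y x v
  linear_combination (norm := module) J + s1 - (2 : ℂ) • i2

theorem norm_box_le (a b : V) : ‖box a b‖ ≤ ‖a‖ * ‖b‖ :=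
  (box a b).opNorm_le_bound (by positivity) fun v ↦ by rw [box_apply]; exact norm_tp_le a b v

/-- `quadPair y a b = Q(a,b) Q_y`, i.e. `v ↦ {a, {y v y}, b}`; so `quadPair y x x = Q_x Q_y`. -/
noncomputable def quadPair (y a b : V) : V →L[ℂ] V :=
  LinearMap.mkContinuous
    { toFun := fun v ↦ tp a (tp y v y) b
      map_add' := fun u v ↦ by simp only [add_snd]
      map_smul' := fun c v ↦ by simp [conj_snd] }
    (‖a‖ * ‖y‖ * ‖y‖ * ‖b‖)
    fun v ↦ calc ‖tp a (tp y v y) b‖ ≤ ‖a‖ * ‖tp y v y‖ * ‖b‖ := norm_tp_le _ _ _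
      _ ≤ ‖a‖ * (‖y‖ * ‖v‖ * ‖y‖) * ‖b‖ := by gcongr; exact norm_tp_le y v y
      _ = ‖a‖ * ‖y‖ * ‖y‖ * ‖b‖ * ‖v‖ := by ring

@[simp] theorem quadPair_apply (y a b v : V) : quadPair y a b v = tp a (tp y v y) b := rfl

theorem norm_quadPair_le (y a b : V) : ‖quadPair y a b‖ ≤ ‖a‖ * ‖y‖ * ‖y‖ * ‖b‖ :=
  LinearMap.mkContinuous_norm_le _ (by positivity) _

theorem quadPair_comm (y a b : V) : quadPair y a b = quadPair y b a := by
  ext v; simp [symm_outer a _ b]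

section Bergman

variable (x y : V)

theorem commute_box_quadPair : Commute (box x y) (quadPair y x x) := by
  ext v
  simp only [mul_apply_eq_comp, box_apply, quadPair_apply]
  have J := jordan_identity x y x (tp y v y) x
  have s : tp x (tp y v y) (tp x y x) = tp (tp x y x) (tp y v y) x := symm_outer _ _ _
  have i2 := tp_tp_eq_tp_quad x y (tp y v y)
  have r : tp x (tp y (tp x y v) y) x = tp x (tp y x (tp y v y)) x := by
    rw [tp_quad_eq_quad_tp]
  linear_combination (norm := module) J + s - (2 : ℂ) • i2 - r

theorem box_anticomm_box (a : V) :
    box x y * box a y + box a y * box x y = box (tp x y a) y + quadPair y x a := by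
  ext v
  simp only [add_apply, mul_apply_eq_comp, box_apply, quadPair_apply]
  have J := jordan_identity v y a y x
  have p1 : tp v y (tp a y x) = tp (tp x y a) y v := by
    rw [symm_outer a y x, symm_outer v y (tp x y a)]
  have p2 : tp (tp v y a) y x = tp x y (tp a y v) := by
    rw [symm_outer v y a, symm_outer (tp a y v) y x]
  have p3 : tp a (tp y v y) x = tp x (tp y v y) a := symm_outer _ _ _
  have p4 : tp a y (tp v y x) = tp a y (tp x y v) := by rw [symm_outer v y x]
  linear_combination (norm := module) - J + p1 - p2 + p3 - p4

theorem box_anticomm_quadPair (a b : V) :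
    box x y * quadPair y a b + quadPair y a b * box x y
      = quadPair y (tp x y a) b + quadPair y a (tp x y b) := by
  ext v
  simp only [add_apply, mul_apply_eq_comp, box_apply, quadPair_apply]
  have J := jordan_identity x y a (tp y v y) b
  have q : tp a (tp y (tp x y v) y) b = tp a (tp y x (tp y v y)) b := by
    rw [tp_quad_eq_quad_tp]
  linear_combination (norm := module) J + q

theorem quadPair_anticomm_box (a : V) :
    quadPair y x x * box a y + box a y * quadPair y x x = 2 • quadPair y (tp x y a) x := by
  ext v
  simp only [add_apply, mul_apply_eq_comp, box_apply, quadPair_apply, smul_apply]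
  have h1 : tp x (tp y (tp a y v) y) x = tp x (tp y a (tp y v y)) x := by
    rw [tp_quad_eq_quad_tp]
  have J := jordan_identity a y x (tp y v y) x
  have s1 : tp (tp a y x) (tp y v y) x = tp (tp x y a) (tp y v y) x := by rw [symm_outer a y x]
  have s2 : tp x (tp y v y) (tp a y x) = tp (tp x y a) (tp y v y) x := by
    rw [symm_outer a y x, symm_outer x _ (tp x y a)]
  linear_combination (norm := module) h1 + J + s1 + s2

def tpIter (k : ℕ) : V := (tp x y)^[k] x

@[simp] theorem tpIter_zero : tpIter x y 0 = x := rfl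

theorem tpIter_one : tpIter x y 1 = tp x y x := rfl

theorem tpIter_succ (k : ℕ) : tpIter x y (k + 1) = tp x y (tpIter x y k) :=
  Function.iterate_succ_apply' _ _ _

theorem quadPair_anticomm_quadPair_tpIter (i j : ℕ) :
    quadPair y x x * quadPair y (tpIter x y i) (tpIter x y j)
      + quadPair y (tpIter x y i) (tpIter x y j) * quadPair y x x
      = 2 • quadPair y (tpIter x y (i + 1)) (tpIter x y (j + 1)) := by
  -- As `L = box x y` and `P = quadPair y x x` commute, `{P, {L, a}} = {L, {P, a}}`; both inner
  -- anticommutators are known for `a = box (tpIter x y j) y` and, by induction on `i`, for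
  -- `a = quadPair y (tpIter x y i) (tpIter x y j)`.
  induction i generalizing j with
  | zero =>
    have key := (commute_box_quadPair x y).anticomm_left_comm (box (tpIter x y j) y)
    rw [box_anticomm_box, quadPair_anticomm_box, ← tpIter_succ] at key
    have hP := quadPair_anticomm_box x y (tpIter x y (j + 1))
    have hL := box_anticomm_quadPair x y (tpIter x y (j + 1)) x
    rw [← tpIter_succ] at hP
    rw [← tpIter_succ, ← tpIter_one, quadPair_comm y (tpIter x y (j + 1)) (tpIter x y 1)] at hL
    simp only [mul_add, add_mul, mul_smul_comm, smul_mul_assoc] at key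
    rw [tpIter_zero, zero_add]
    linear_combination (norm := module) key - hP + 2 • hL
  | succ i ih =>
    have key := (commute_box_quadPair x y).anticomm_left_comm
      (quadPair y (tpIter x y i) (tpIter x y j))
    rw [box_anticomm_quadPair, ← tpIter_succ, ← tpIter_succ, ih] at key
    have hL := box_anticomm_quadPair x y (tpIter x y (i + 1)) (tpIter x y (j + 1))
    rw [← tpIter_succ, ← tpIter_succ] at hL
    simp only [mul_add, add_mul, mul_smul_comm, smul_mul_assoc] at key
    linear_combination (norm := module) key + 2 • hL - ih (j + 1)

noncomputable def quadPairSum (n : ℕ) : V →L[ℂ] V :=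
  ∑ p ∈ antidiagonal n, quadPair y (tpIter x y p.1) (tpIter x y p.2)

theorem box_anticomm_quadPairSum (n : ℕ) :
    box x y * quadPairSum x y n + quadPairSum x y n * box x y
      = 2 • quadPairSum x y (n + 1) - 2 • quadPair y x (tpIter x y (n + 1)) := by
  have h₁ := Nat.sum_antidiagonal_succ (n := n)
    (f := fun p ↦ quadPair y (tpIter x y p.1) (tpIter x y p.2))
  have h₂ := Nat.sum_antidiagonal_succ' (n := n)
    (f := fun p ↦ quadPair y (tpIter x y p.1) (tpIter x y p.2))
  have hc := quadPair_comm y x (tpIter x y (n + 1))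
  simp only [tpIter_zero] at h₁ h₂
  simp only [quadPairSum]
  rw [mul_sum, sum_mul, ← sum_add_distrib]
  simp_rw [box_anticomm_quadPair, ← tpIter_succ]
  rw [sum_add_distrib]
  linear_combination (norm := module) - h₁ - h₂ + hc

theorem quadPair_anticomm_quadPairSum (n : ℕ) :
    quadPair y x x * quadPairSum x y n + quadPairSum x y n * quadPair y x x
      = 2 • quadPairSum x y (n + 2) - 4 • quadPair y x (tpIter x y (n + 2)) := by
  have h₁ := Nat.sum_antidiagonal_succ (n := n + 1)
    (f := fun p ↦ quadPair y (tpIter x y p.1) (tpIter x y p.2))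
  have h₂ := Nat.sum_antidiagonal_succ' (n := n)
    (f := fun p ↦ quadPair y (tpIter x y (p.1 + 1)) (tpIter x y p.2))
  have hc := quadPair_comm y x (tpIter x y (n + 2))
  simp only [tpIter_zero] at h₁ h₂
  simp only [quadPairSum]
  rw [mul_sum, sum_mul, ← sum_add_distrib]
  simp_rw [quadPair_anticomm_quadPair_tpIter]
  rw [← smul_sum]
  linear_combination (norm := module) (-2 : ℂ) • h₁ - (2 : ℂ) • h₂ + (2 : ℂ) • hc

theorem quadPairSum_zero : quadPairSum x y 0 = quadPair y x x := by
  simp [quadPairSum]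

theorem quadPairSum_one : quadPairSum x y 1 = 2 • quadPair y (tpIter x y 1) x := by
  rw [quadPairSum, Nat.sum_antidiagonal_succ, Nat.antidiagonal_zero, sum_singleton,
    quadPair_comm y (tpIter x y 0)]
  simp only [tpIter_zero, zero_add, two_nsmul]

/-- Closed form of `chebyshevSeq (box x y) (quadPair y x x)`, from which the bound
`(n + 1) (‖x‖ ‖y‖) ^ n` on the norm of its `n`-th term can be read off. -/
noncomputable def chebyshevTerm : ℕ → V →L[ℂ] V
  | 0 => 1
  | 1 => 2 • box x y
  | n + 2 => 2 • box (tpIter x y (n + 1)) y + quadPairSum x y n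

theorem box_anticomm_chebyshevTerm (n : ℕ) :
    box x y * chebyshevTerm x y (n + 1) + chebyshevTerm x y (n + 1) * box x y
      = 2 • box (tpIter x y (n + 1)) y + 2 • quadPairSum x y n := by
  cases n with
  | zero =>
    have h := box_anticomm_box x y x
    simp only [chebyshevTerm, mul_smul_comm, smul_mul_assoc, quadPairSum_zero, zero_add,
      tpIter_one]
    linear_combination (norm := module) 2 • h
  | succ k =>
    have h₁ := box_anticomm_box x y (tpIter x y (k + 1))
    have h₂ := box_anticomm_quadPairSum x y k
    rw [← tpIter_succ] at h₁
    simp only [chebyshevTerm, mul_add, add_mul, mul_smul_comm, smul_mul_assoc]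
    linear_combination (norm := module) 2 • h₁ + h₂

theorem quadPair_anticomm_chebyshevTerm (n : ℕ) :
    quadPair y x x * chebyshevTerm x y n + chebyshevTerm x y n * quadPair y x x
      = 2 • quadPairSum x y n := by
  match n with
  | 0 => simp only [chebyshevTerm, quadPairSum_zero, mul_one, one_mul, two_nsmul]
  | 1 =>
    have h := quadPair_anticomm_box x y x
    simp only [chebyshevTerm, mul_smul_comm, smul_mul_assoc, quadPairSum_one, tpIter_one]
    linear_combination (norm := module) 2 • h
  | k + 2 =>
    have h₁ := quadPair_anticomm_box x y (tpIter x y (k + 1))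
    have h₂ := quadPair_anticomm_quadPairSum x y k
    have hc := quadPair_comm y x (tpIter x y (k + 2))
    rw [← tpIter_succ] at h₁
    simp only [chebyshevTerm, mul_add, add_mul, mul_smul_comm, smul_mul_assoc]
    linear_combination (norm := module) 2 • h₁ + h₂ - 4 • hc

theorem chebyshevSeq_eq_chebyshevTerm :
    ∀ n, chebyshevSeq (box x y) (quadPair y x x) n = chebyshevTerm x y n
  | 0 => rfl
  | 1 => by rw [chebyshevSeq, chebyshevTerm, two_mul, two_nsmul]
  | n + 2 => by
    have ih₁ := chebyshevSeq_eq_chebyshevTerm (n + 1)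
    have ih₀ := chebyshevSeq_eq_chebyshevTerm n
    have hL := ((Commute.refl (box x y)).chebyshevSeq_right (commute_box_quadPair x y) (n + 1)).eq
    have hP := ((commute_box_quadPair x y).symm.chebyshevSeq_right (.refl _) n).eq
    rw [ih₁] at hL
    rw [ih₀] at hP
    have hLT := box_anticomm_chebyshevTerm x y n
    have hPT := quadPair_anticomm_chebyshevTerm x y n
    have hT : chebyshevTerm x y (n + 2) = 2 • box (tpIter x y (n + 1)) y + quadPairSum x y n :=
      rfl
    rw [chebyshevSeq, ih₁, ih₀, two_mul, add_mul, hT]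
    -- by `hL` and `hP`, twice the recurrence only involves the anticommutators `hLT` and `hPT`
    apply smul_right_injective _ (two_ne_zero : (2 : ℂ) ≠ 0)
    linear_combination (norm := module) 2 • hLT - hPT + 2 • hL - hP

theorem norm_tpIter_le (k : ℕ) : ‖tpIter x y k‖ ≤ ‖x‖ * (‖x‖ * ‖y‖) ^ k := by
  induction k with
  | zero => simp
  | succ k ih =>
    calc ‖tpIter x y (k + 1)‖ ≤ ‖x‖ * ‖y‖ * ‖tpIter x y k‖ := by
          rw [tpIter_succ]; exact norm_tp_le _ _ _
      _ ≤ ‖x‖ * ‖y‖ * (‖x‖ * (‖x‖ * ‖y‖) ^ k) := by gcongr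
      _ = ‖x‖ * (‖x‖ * ‖y‖) ^ (k + 1) := by ring

theorem norm_box_tpIter_le (k : ℕ) : ‖box (tpIter x y k) y‖ ≤ (‖x‖ * ‖y‖) ^ (k + 1) :=
  calc ‖box (tpIter x y k) y‖ ≤ ‖x‖ * (‖x‖ * ‖y‖) ^ k * ‖y‖ :=
        (norm_box_le _ _).trans (by gcongr; exact norm_tpIter_le x y k)
    _ = (‖x‖ * ‖y‖) ^ (k + 1) := by ring

theorem norm_quadPair_tpIter_le (i j : ℕ) :
    ‖quadPair y (tpIter x y i) (tpIter x y j)‖ ≤ (‖x‖ * ‖y‖) ^ (i + j + 2) :=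
  calc ‖quadPair y (tpIter x y i) (tpIter x y j)‖
        ≤ ‖x‖ * (‖x‖ * ‖y‖) ^ i * ‖y‖ * ‖y‖ * (‖x‖ * (‖x‖ * ‖y‖) ^ j) :=
        (norm_quadPair_le _ _ _).trans (by gcongr <;> exact norm_tpIter_le x y _)
    _ = (‖x‖ * ‖y‖) ^ (i + j + 2) := by ring

theorem norm_quadPairSum_le (n : ℕ) :
    ‖quadPairSum x y n‖ ≤ (n + 1) * (‖x‖ * ‖y‖) ^ (n + 2) :=
  calc ‖quadPairSum x y n‖ ≤ ∑ _p ∈ antidiagonal n, (‖x‖ * ‖y‖) ^ (n + 2) :=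
        (norm_sum_le _ _).trans <| sum_le_sum fun p hp ↦ by
          rw [← mem_antidiagonal.1 hp]; exact norm_quadPair_tpIter_le x y p.1 p.2
    _ = (n + 1) * (‖x‖ * ‖y‖) ^ (n + 2) := by simp

theorem norm_chebyshevTerm_le : ∀ n : ℕ, ‖chebyshevTerm x y n‖ ≤ (n + 1) * (‖x‖ * ‖y‖) ^ n
  | 0 => by simpa [chebyshevTerm, ContinuousLinearMap.one_def] using ContinuousLinearMap.norm_id_le
  | 1 => calc ‖2 • box x y‖ ≤ 2 * (‖x‖ * ‖y‖) ^ 1 :=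
          norm_nsmul_le.trans (by push_cast; gcongr; exact norm_box_tpIter_le x y 0)
      _ = _ := by norm_num
  | n + 2 =>
    calc ‖2 • box (tpIter x y (n + 1)) y + quadPairSum x y n‖
        ≤ 2 * (‖x‖ * ‖y‖) ^ (n + 2) + (n + 1) * (‖x‖ * ‖y‖) ^ (n + 2) :=
          (norm_add_le _ _).trans <| add_le_add
            (norm_nsmul_le.trans (by push_cast; gcongr; exact norm_box_tpIter_le x y (n + 1)))
            (norm_quadPairSum_le x y n)
      _ = _ := by push_cast; ring

theorem norm_le_mul_norm_bergman {r : ℝ} (hr : r < 1) (hxy : ‖x‖ * ‖y‖ ≤ r) (v : V) :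
    ‖v‖ ≤ ((1 - r) ^ 2)⁻¹ * ‖v - (2 : ℂ) • tp x y v + tp x (tp y v y) x‖ := by
  have hr₀ : 0 ≤ r := (by positivity : 0 ≤ ‖x‖ * ‖y‖).trans hxy
  have hB : (1 - 2 * box x y + quadPair y x x) v = v - (2 : ℂ) • tp x y v + tp x (tp y v y) x := by
    simp only [add_apply, sub_apply, one_apply_eq_self, two_mul, box_apply, quadPair_apply,
      two_smul]
  rw [← hB]
  refine norm_le_of_norm_chebyshevSeq_le (commute_box_quadPair x y) hr₀ hr ?_ (fun n ↦ ?_) v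
  · calc ‖quadPair y x x‖ ≤ (‖x‖ * ‖y‖) ^ 2 := by simpa using norm_quadPair_tpIter_le x y 0 0
      _ ≤ 1 := pow_le_one₀ (by positivity) (hxy.trans hr.le)
  · rw [chebyshevSeq_eq_chebyshevTerm]
    exact (norm_chebyshevTerm_le x y n).trans (by gcongr)

end Bergman

end JBStarTriple

theorem inv_le_mul_of_inv_le_mul {α : Type*} [Field α] [LinearOrder α] [IsStrictOrderedRing α]
    {a b t : α} (ha : 0 < a) (hb : 0 ≤ b) (h : a⁻¹ ≤ b * t) : t⁻¹ ≤ b * a := by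
  have ht : 0 < t := pos_of_mul_pos_right ((inv_pos.2 ha).trans_le h) hb
  rw [inv_le_iff_one_le_mul₀' ht]
  calc 1 ≤ a * (b * t) := (inv_le_iff_one_le_mul₀' ha).1 h
    _ = t * (b * a) := by ring

theorem stmt7 {V : Type*} [NormedAddCommGroup V] [NormedSpace ℂ V] [JBStarTriple V]
    (B : V → V → V →L[ℂ] V)
    (hB : ∀ b c x : V, B b c x = x - (2 : ℂ) • tp b c x + tp b (tp c x c) b)
    (Bih : V → V →L[ℂ] V)
    (hBsq : ∀ z : V, ‖z‖ < 1 → (B z z).comp ((Bih z).comp (Bih z)) = ContinuousLinearMap.id ℂ V)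
    (hBih : ∀ z : V, ‖z‖ < 1 → ‖Bih z‖ = (1 - ‖z‖ ^ 2)⁻¹)
    (g : V → V → V)
    (hg : ∀ y z : V, ‖y‖ < 1 → ‖z‖ < 1 →
      1 - ‖g (-y) z‖ ^ 2 = ‖(Bih z).comp ((B z y).comp (Bih y))‖⁻¹)
    (y : ℕ → V) (hy : ∀ k, ‖y k‖ < 1) (ξ : V) (hξ : ‖ξ‖ = 1)
    (hconv : Filter.Tendsto y Filter.atTop (nhds ξ))
    (z : V) (hz : ‖z‖ < 1) :
    Filter.Tendsto (fun k => ‖g (-(y k)) z‖) Filter.atTop (nhds 1) := by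
  set c := ((1 - ‖z‖) ^ 2)⁻¹
  set μ := ‖(B z z).comp (Bih z)‖
  have hc : 0 < c := inv_pos.2 (pow_pos (sub_pos.2 hz) 2)
  have hBih_z : ∀ v, ‖v‖ ≤ μ * ‖Bih z v‖ := fun v ↦ by
    simpa [← ContinuousLinearMap.comp_apply, ContinuousLinearMap.comp_assoc, hBsq z hz]
      using ((B z z).comp (Bih z)).le_opNorm (Bih z v)
  have hB_y : ∀ k v, ‖v‖ ≤ c * ‖B z (y k) v‖ := fun k v ↦ by
    rw [hB]
    exact norm_le_mul_norm_bergman z (y k) hz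
      (mul_le_of_le_one_right (norm_nonneg z) (hy k).le) v
  have hT : ∀ k, ‖(Bih z).comp ((B z (y k)).comp (Bih (y k)))‖⁻¹ ≤ c * μ * (1 - ‖y k‖ ^ 2) :=
    fun k ↦ by
      refine inv_le_mul_of_inv_le_mul (sub_pos.2 (pow_lt_one₀ (norm_nonneg _) (hy k) two_ne_zero))
        (by positivity) ?_
      rw [← hBih _ (hy k), mul_assoc]
      exact (opNorm_le_mul_opNorm_comp hc.le (hB_y k) _).trans
        (mul_le_mul_of_nonneg_left (opNorm_le_mul_opNorm_comp (norm_nonneg _) hBih_z _) hc.le)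
  have hlim : Tendsto (fun k ↦ c * μ * (1 - ‖y k‖ ^ 2)) atTop (𝓝 0) := by
    simpa [hξ] using ((tendsto_const_nhds.sub (hconv.norm.pow 2)).const_mul (c * μ) :
      Tendsto _ _ (𝓝 (c * μ * (1 - ‖ξ‖ ^ 2))))
  have hsq : Tendsto (fun k ↦ ‖g (-(y k)) z‖ ^ 2) atTop (𝓝 1) := by
    have h0 := squeeze_zero (fun k ↦ inv_nonneg.2 (norm_nonneg _)) hT hlim
    simpa [← hg _ z (hy _) hz] using (tendsto_const_nhds (x := (1 : ℝ))).sub h0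
  simpa [Real.sqrt_sq (norm_nonneg _)] using hsq.sqrt
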